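/- Let d = 3 and let α_1, α_2, α_3 > 0, and set p_i = (1/α_i)/(1/α_1 + 1/α_2 + 1/α_3). Then Diag(α_1, α_2, α_3) satisfies Condition (C) if and only if 4 > p_2 p_3 (r_1−2)/p_1, 4 > p_1 p_3 (r_2−2)/p_2, and 4 > p_1 p_2 (r_3−2)/p_3, where r_1 = λ_3/λ_2+λ_2/λ_3, r_2 = λ_3/λ_1+λ_1/λ_3, r_3 = λ_1/λ_2+λ_2/λ_1. -/

import Mathlib

open Matrix Finset

/-- The matrix `Γ^{(k)}`. -/
noncomputable def GammaK {d : ℕ} (lam : Fin d → ℝ) (Γ : Matrix (Fin d) (Fin d) ℝ)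
    (k : Fin d) : Matrix (Fin d) (Fin d) ℝ :=
  Matrix.of fun i j => (lam i + lam j) / 2 * (Γ i j + Γ k k - Γ i k - Γ j k)

/-- Condition (C). -/
def CondC {d : ℕ} (lam : Fin d → ℝ) (Γ : Matrix (Fin d) (Fin d) ℝ) : Prop :=
  Γ.PosDef ∧ ∀ k : Fin d, ∀ x : Fin d → ℝ, x k = 0 → x ≠ 0 →
    0 < x ⬝ᵥ (GammaK lam Γ k).mulVec x

private lemma quad_pos (A B C u v : ℝ) (hA : 0 < A) (hdet : B^2 < A*C)
    (huv : u ≠ 0 ∨ v ≠ 0) : 0 < A*u^2 + 2*B*u*v + C*v^2 := by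
  rcases eq_or_ne v 0 with hv | hv
  · rcases huv with hu | hu
    · subst hv; have := sq_pos_of_ne_zero hu; nlinarith
    · exact absurd hv hu
  · have h1 : 0 < (A*u + B*v)^2 + (A*C - B^2)*v^2 := by
      have := sq_pos_of_ne_zero hv
      nlinarith [sq_nonneg (A*u + B*v)]
    nlinarith
private lemma quad_det (A B C : ℝ) (hA : 0 < A)
    (h : ∀ u v : ℝ, (u ≠ 0 ∨ v ≠ 0) → 0 < A*u^2 + 2*B*u*v + C*v^2) :
    B^2 < A*C := by
  have := h B (-A) (Or.inr (neg_ne_zero.mpr hA.ne'))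
  nlinarith

/-- Algebraic equivalence between the 2×2 determinant condition and the p-form condition. -/
private lemma key (li lj ai aj ak s r : ℝ) (hli : 0 < li) (hlj : 0 < lj)
    (hai : 0 < ai) (haj : 0 < aj) (hak : 0 < ak)
    (hs : s = 1/ai + 1/aj + 1/ak) (hr : r * (li*lj) = li^2 + lj^2) :
    (((li+lj)/2 * ak)^2 < (li*(ai+ak)) * (lj*(aj+ak))) ↔
      ((1/ai)/s) * ((1/aj)/s) * (r - 2) / ((1/ak)/s) < 4 := by
  have hP : 0 < ai*aj + ai*ak + aj*ak := by positivity
  have hs0 : 0 < s := by rw [hs]; positivity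
  have hr' : r = li/lj + lj/li := by field_simp; linarith [hr]
  subst hr'
  have heq : ((1/ai)/s) * ((1/aj)/s) * ((li/lj + lj/li) - 2) / ((1/ak)/s)
      = (ak^2 * (li - lj)^2) / ((ai*aj + ai*ak + aj*ak) * (li*lj)) := by
    subst hs
    field_simp
    ring
  rw [heq, div_lt_iff₀ (by positivity)]
  constructor <;> intro h <;> nlinarith [h]

theorem stmt11 (l1 l2 l3 a1 a2 a3 p1 p2 p3 r1 r2 r3 : ℝ)
    (hl1 : 0 < l1) (hl2 : 0 < l2) (hl3 : 0 < l3)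
    (ha1 : 0 < a1) (ha2 : 0 < a2) (ha3 : 0 < a3)
    (hp1 : p1 = (1 / a1) / (1 / a1 + 1 / a2 + 1 / a3))
    (hp2 : p2 = (1 / a2) / (1 / a1 + 1 / a2 + 1 / a3))
    (hp3 : p3 = (1 / a3) / (1 / a1 + 1 / a2 + 1 / a3))
    (hr1 : r1 = l3 / l2 + l2 / l3) (hr2 : r2 = l3 / l1 + l1 / l3)
    (hr3 : r3 = l1 / l2 + l2 / l1) :
    CondC ![l1, l2, l3] (Matrix.diagonal ![a1, a2, a3]) ↔
      (4 > p2 * p3 * (r1 - 2) / p1 ∧ 4 > p1 * p3 * (r2 - 2) / p2 ∧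
        4 > p1 * p2 * (r3 - 2) / p3) := by
  have hA1 : (0:ℝ) < l2*(a2+a1) := by positivity
  have hA2 : (0:ℝ) < l1*(a1+a2) := by positivity
  have hA3 : (0:ℝ) < l1*(a1+a3) := by positivity
  -- form lemmas for each k
  have form0 : ∀ x : Fin 3 → ℝ, x 0 = 0 →
      x ⬝ᵥ (GammaK ![l1,l2,l3] (Matrix.diagonal ![a1,a2,a3]) 0).mulVec x =
        l2*(a2+a1) * (x 1)^2 + 2*((l2+l3)/2*a1)*(x 1)*(x 2) + l3*(a3+a1)*(x 2)^2 := by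
    intro x hx
    simp [GammaK, Matrix.mulVec, dotProduct, Fin.sum_univ_three, Matrix.diagonal_apply, hx]
    ring
  have form1 : ∀ x : Fin 3 → ℝ, x 1 = 0 →
      x ⬝ᵥ (GammaK ![l1,l2,l3] (Matrix.diagonal ![a1,a2,a3]) 1).mulVec x =
        l1*(a1+a2) * (x 0)^2 + 2*((l1+l3)/2*a2)*(x 0)*(x 2) + l3*(a3+a2)*(x 2)^2 := by
    intro x hx
    simp [GammaK, Matrix.mulVec, dotProduct, Fin.sum_univ_three, Matrix.diagonal_apply, hx]
    ring
  have form2 : ∀ x : Fin 3 → ℝ, x 2 = 0 →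
      x ⬝ᵥ (GammaK ![l1,l2,l3] (Matrix.diagonal ![a1,a2,a3]) 2).mulVec x =
        l1*(a1+a3) * (x 0)^2 + 2*((l1+l2)/2*a3)*(x 0)*(x 1) + l2*(a2+a3)*(x 1)^2 := by
    intro x hx
    simp [GammaK, Matrix.mulVec, dotProduct, Fin.sum_univ_three, Matrix.diagonal_apply, hx]
    ring
  have key1 := key l2 l3 a2 a3 a1 (1/a1+1/a2+1/a3) r1 hl2 hl3 ha2 ha3 ha1 (by ring)
    (by rw [hr1]; field_simp; ring)
  have key2 := key l1 l3 a1 a3 a2 (1/a1+1/a2+1/a3) r2 hl1 hl3 ha1 ha3 ha2 (by ring)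
    (by rw [hr2]; field_simp; ring)
  have key3 := key l1 l2 a1 a2 a3 (1/a1+1/a2+1/a3) r3 hl1 hl2 ha1 ha2 ha3 (by ring)
    (by rw [hr3]; field_simp)
  subst hp1 hp2 hp3
  constructor
  · rintro ⟨-, h⟩
    refine ⟨?_, ?_, ?_⟩
    · rw [gt_iff_lt, ← key1]
      refine quad_det _ _ _ hA1 fun u v huv => ?_
      have hx : (![0, u, v] : Fin 3 → ℝ) ≠ 0 := by
        intro hc
        rcases huv with hu | hv
        · exact hu (congrFun hc 1)
        · exact hv (congrFun hc 2)
      have := h 0 ![0, u, v] rfl hx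
      rw [form0 _ rfl] at this
      simpa using this
    · rw [gt_iff_lt, ← key2]
      refine quad_det _ _ _ hA2 fun u v huv => ?_
      have hx : (![u, 0, v] : Fin 3 → ℝ) ≠ 0 := by
        intro hc
        rcases huv with hu | hv
        · exact hu (congrFun hc 0)
        · exact hv (congrFun hc 2)
      have := h 1 ![u, 0, v] rfl hx
      rw [form1 _ rfl] at this
      simpa using this
    · rw [gt_iff_lt, ← key3]
      refine quad_det _ _ _ hA3 fun u v huv => ?_
      have hx : (![u, v, 0] : Fin 3 → ℝ) ≠ 0 := by
        intro hc
        rcases huv with hu | hv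
        · exact hu (congrFun hc 0)
        · exact hv (congrFun hc 1)
      have := h 2 ![u, v, 0] rfl hx
      rw [form2 _ rfl] at this
      simpa using this
  · rintro ⟨h1, h2, h3⟩
    rw [gt_iff_lt, ← key1] at h1
    rw [gt_iff_lt, ← key2] at h2
    rw [gt_iff_lt, ← key3] at h3
    refine ⟨Matrix.PosDef.diagonal fun i => by fin_cases i <;> assumption, ?_⟩
    intro k x hxk hx
    fin_cases k
    · have hxk' : x 0 = 0 := hxk
      show 0 < x ⬝ᵥ (GammaK ![l1, l2, l3] (Matrix.diagonal ![a1, a2, a3]) 0).mulVec x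
      rw [form0 x hxk']
      refine quad_pos _ _ _ _ _ hA1 h1 ?_
      by_contra hc
      push_neg at hc
      exact hx (funext fun m => by
        fin_cases m <;> simp only [Pi.zero_apply] <;>
          first | exact hxk' | exact hc.1 | exact hc.2)
    · have hxk' : x 1 = 0 := hxk
      show 0 < x ⬝ᵥ (GammaK ![l1, l2, l3] (Matrix.diagonal ![a1, a2, a3]) 1).mulVec x
      rw [form1 x hxk']
      refine quad_pos _ _ _ _ _ hA2 h2 ?_
      by_contra hc
      push_neg at hc
      exact hx (funext fun m => by
        fin_cases m <;> simp only [Pi.zero_apply] <;>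
          first | exact hxk' | exact hc.1 | exact hc.2)
    · have hxk' : x 2 = 0 := hxk
      show 0 < x ⬝ᵥ (GammaK ![l1, l2, l3] (Matrix.diagonal ![a1, a2, a3]) 2).mulVec x
      rw [form2 x hxk']
      refine quad_pos _ _ _ _ _ hA3 h3 ?_
      by_contra hc
      push_neg at hc
      exact hx (funext fun m => by
        fin_cases m <;> simp only [Pi.zero_apply] <;>
          first | exact hxk' | exact hc.1 | exact hc.2)
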